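/- arXiv:2401.03874 — 5 statements merged into one kernel-verified Lean document; each statement's English description precedes it below -/
import Mathlib

section
/- Let n ≥ 3. Then for every exponent N ≥ 1, C^N ≢ −I (mod F_{2n}), where C = [[0,1],[1,1]]. -/
/-!
If `C ^ N ≡ -1 (mod F₂ₙ)`, the `(0,1)` entry `F_N` of `C ^ N` vanishes, so `F₂ₙ ∣ F_N` and hence
`2n ∣ N`. Since `F₂ₙ₊₁ ≡ F₂ₙ₋₁`, we get `C ^ (2n) ≡ F₂ₙ₋₁ • 1`, and `det C = -1` gives
`F₂ₙ₋₁ ^ 2 ≡ 1`. So `C ^ N` is `1` or `F₂ₙ₋₁ • 1`, and neither is `-1` because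
`2 < F₂ₙ` and `F₂ₙ₋₁ + 1 < F₂ₙ`.
-/

theorem companion_pow_succ {R : Type*} [Semiring R] (N : ℕ) :
    (!![0, 1; 1, 1] : Matrix (Fin 2) (Fin 2) R) ^ (N + 1) =
      !![(Nat.fib N : R), Nat.fib (N + 1); Nat.fib (N + 1), Nat.fib (N + 2)] := by
  induction N with
  | zero => simp
  | succ k ih =>
    rw [pow_succ, ih]
    ext i j
    fin_cases i <;> fin_cases j <;>
      simp [Matrix.mul_apply, Fin.sum_univ_two, Nat.fib_add_two (n := k + 1),
        Nat.fib_add_two (n := k)]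

theorem companion_pow_succ_eq_smul_one {R : Type*} [Semiring R] {m : ℕ}
    (hm : (Nat.fib (m + 1) : R) = 0) :
    (!![0, 1; 1, 1] : Matrix (Fin 2) (Fin 2) R) ^ (m + 1) = (Nat.fib m : R) • 1 := by
  rw [companion_pow_succ, Nat.fib_add_two, Nat.cast_add, hm, add_zero]
  ext i j
  fin_cases i <;> fin_cases j <;> simp

theorem det_companion_pow_two_mul {R : Type*} [CommRing R] (n : ℕ) :
    ((!![0, 1; 1, 1] : Matrix (Fin 2) (Fin 2) R) ^ (2 * n)).det = 1 := by
  simp [Matrix.det_pow, Matrix.det_fin_two_of, pow_mul]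

theorem Nat.fib_dvd_fib_iff {m N : ℕ} (hm : 3 ≤ m) : fib m ∣ fib N ↔ m ∣ N := by
  refine ⟨fun h => ?_, Nat.fib_dvd m N⟩
  have hgcd : fib (gcd m N) = fib m := by rw [fib_gcd, Nat.gcd_eq_left h]
  have hle : gcd m N ≤ m := Nat.le_of_dvd (by omega) (Nat.gcd_dvd_left m N)
  have htwo : 2 ≤ gcd m N := by
    by_contra! hlt
    have : fib (gcd m N) ≤ fib 2 := fib_mono hlt.le
    have : fib 2 < fib m := (fib_lt_fib le_rfl).2 (by omega)
    omega
  have : gcd m N = m := by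
    by_contra hne
    have := (fib_lt_fib htwo).2 (lt_of_le_of_ne hle hne)
    omega
  exact this ▸ Nat.gcd_dvd_right m N

theorem Nat.fib_add_one_add_two_le {m : ℕ} (hm : 3 ≤ m) : fib (m + 1) + 2 ≤ fib (m + 2) := by
  have : fib 3 ≤ fib m := fib_mono hm
  rw [fib_add_two]
  simp only [show fib 3 = 2 from rfl] at this
  omega

theorem ZMod.natCast_ne_neg_one {m x : ℕ} (hx : x + 1 < m) : (x : ZMod m) ≠ -1 := by
  intro h
  have hdvd : m ∣ x + 1 := by
    rw [← ZMod.natCast_eq_zero_iff, Nat.cast_succ, h, neg_add_cancel]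
  have := Nat.le_of_dvd x.succ_pos hdvd
  omega

theorem pow_eq_one_or_self_of_sq_eq_one {M : Type*} [Monoid M] {a : M} (ha : a ^ 2 = 1) (k : ℕ) :
    a ^ k = 1 ∨ a ^ k = a := by
  rw [pow_eq_pow_mod k ha]
  rcases Nat.mod_two_eq_zero_or_one k with h | h <;> simp [h]

theorem companion_pow_ne_neg_one_mod_fib_even (n : ℕ) (hn : 3 ≤ n) :
    ∀ N : ℕ, 1 ≤ N →
      (!![0, 1; 1, 1] : Matrix (Fin 2) (Fin 2) (ZMod (Nat.fib (2 * n)))) ^ N ≠ -1 := by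
  intro N hN hC
  set C : Matrix (Fin 2) (Fin 2) (ZMod (Nat.fib (2 * n))) := !![0, 1; 1, 1]
  set a := ((Nat.fib (2 * n - 1) : ℕ) : ZMod (Nat.fib (2 * n)))
  have hdvd : 2 * n ∣ N := by
    obtain ⟨M, rfl⟩ : ∃ M, N = M + 1 := ⟨N - 1, by omega⟩
    have h01 := congrFun (congrFun hC 0) 1
    rw [companion_pow_succ] at h01
    rw [← Nat.fib_dvd_fib_iff (by omega), ← ZMod.natCast_eq_zero_iff]
    simpa using h01
  have hC2n : C ^ (2 * n) = a • 1 := by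
    obtain ⟨m, hm⟩ : ∃ m, 2 * n = m + 1 := ⟨2 * n - 1, by omega⟩
    simp only [a, hm, Nat.add_sub_cancel]
    exact companion_pow_succ_eq_smul_one (by rw [← hm, ZMod.natCast_self])
  have ha : a ^ 2 = 1 := by
    have hdet : (C ^ (2 * n)).det = 1 := det_companion_pow_two_mul n
    simpa [hC2n, Matrix.det_smul] using hdet
  obtain ⟨k, rfl⟩ := hdvd
  have hak : a ^ k = -1 := by
    have h00 := congrFun (congrFun hC 0) 0
    simpa [pow_mul, hC2n, smul_pow] using h00
  have hgap : Nat.fib (2 * n - 1) + 2 ≤ Nat.fib (2 * n) := by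
    obtain ⟨m, hm⟩ : ∃ m, 2 * n = m + 2 := ⟨2 * n - 2, by omega⟩
    simpa [hm] using Nat.fib_add_one_add_two_le (m := m) (by omega)
  have hpos : 0 < Nat.fib (2 * n - 1) := Nat.fib_pos.2 (by omega)
  rcases pow_eq_one_or_self_of_sq_eq_one ha k with h | h
  · exact ZMod.natCast_ne_neg_one (x := 1) (m := Nat.fib (2 * n)) (by omega)
      (by simpa [h] using hak)
  · exact ZMod.natCast_ne_neg_one (by omega) (h ▸ hak)
end

section
/- Let q ≠ 5 be a prime and C = [[0,1],[1,1]]. If C^{2ℓ} ≡ I (mod q) for some odd positive integer ℓ, then 5 is a quadratic residue modulo q. -/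
/-!
Put `M = C ^ ℓ = [[a, b], [b, a + b]]`. Then `M ^ 2 = 1` and, as `ℓ` is odd, `det M = -1`;
comparing entries of `M ^ 2 = 1` with the determinant gives `5 b ^ 2 = 4`, so `5 = (5 b / 2) ^ 2`
once `2` is invertible, i.e. for odd `q`. For `q = 2` already `5 = 1 ^ 2`.
-/

open Matrix

lemma exists_companion_pow_eq {R : Type*} [CommRing R] (n : ℕ) :
    ∃ x y : R, (!![0, 1; 1, 1] : Matrix (Fin 2) (Fin 2) R) ^ n = !![x, y; y, x + y] := by
  induction n with
  | zero => exact ⟨1, 0, by simp [one_fin_two]⟩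
  | succ n ih =>
    obtain ⟨x, y, hxy⟩ := ih
    refine ⟨y, x + y, ?_⟩
    rw [pow_succ, hxy, mul_fin_two]
    ring_nf

lemma det_companion {R : Type*} [CommRing R] :
    (!![0, 1; 1, 1] : Matrix (Fin 2) (Fin 2) R).det = -1 := by
  simp [det_fin_two_of]

lemma five_mul_sq_eq_four_of_sq_eq_one_of_det_eq_neg_one {R : Type*} [CommRing R] {a b : R}
    (hsq : !![a, b; b, a + b] ^ 2 = 1) (hdet : (!![a, b; b, a + b]).det = -1) :
    5 * b ^ 2 = 4 := by
  rw [sq, mul_fin_two, one_fin_two] at hsq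
  rw [det_fin_two_of] at hdet
  have h00 : a * a + b * b = 1 := by simpa using congrFun (congrFun hsq 0) 0
  have h01 : a * b + b * (a + b) = 0 := by simpa using congrFun (congrFun hsq 0) 1
  linear_combination 2 * h00 - 2 * hdet + h01

lemma exists_sq_eq_five_of_five_mul_sq_eq_four {K : Type*} [Field K] (h2 : (2 : K) ≠ 0) {b : K}
    (hb : 5 * b ^ 2 = 4) : ∃ x : K, x ^ 2 = 5 :=
  ⟨5 * b / 2, by field_simp; linear_combination 5 * hb⟩

theorem five_is_qr_of_companion_pow_odd_eq_one_general (q : ℕ) (hq : q.Prime)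
    (ℓ : ℕ) (hℓodd : Odd ℓ)
    (h : (!![0, 1; 1, 1] : Matrix (Fin 2) (Fin 2) (ZMod q)) ^ (2 * ℓ) = 1) :
    ∃ b : ZMod q, b ^ 2 = 5 := by
  rcases hq.eq_two_or_odd' with rfl | hq_odd
  · exact ⟨1, by decide⟩
  have := Fact.mk hq
  have h2 : (2 : ZMod q) ≠ 0 := Ring.two_ne_zero <| by
    rw [ZMod.ringChar_zmod_n]; rintro rfl; exact Nat.not_even_iff_odd.mpr hq_odd even_two
  obtain ⟨a, b, hab⟩ := exists_companion_pow_eq (R := ZMod q) ℓ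
  have hsq : (!![0, 1; 1, 1] ^ ℓ : Matrix (Fin 2) (Fin 2) (ZMod q)) ^ 2 = 1 := by
    rw [← pow_mul, mul_comm, h]
  have hdet : (!![0, 1; 1, 1] ^ ℓ : Matrix (Fin 2) (Fin 2) (ZMod q)).det = -1 := by
    rw [det_pow, det_companion, hℓodd.neg_one_pow]
  rw [hab] at hsq hdet
  exact exists_sq_eq_five_of_five_mul_sq_eq_four h2
    (five_mul_sq_eq_four_of_sq_eq_one_of_det_eq_neg_one hsq hdet)

theorem five_is_qr_of_companion_pow_odd_eq_one (q : ℕ) (hq : q.Prime) (hq5 : q ≠ 5)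
    (ℓ : ℕ) (hℓpos : 0 < ℓ) (hℓodd : Odd ℓ)
    (h : (!![0, 1; 1, 1] : Matrix (Fin 2) (Fin 2) (ZMod q)) ^ (2 * ℓ) = 1) :
    ∃ b : ZMod q, b ^ 2 = 5 :=
  five_is_qr_of_companion_pow_odd_eq_one_general q hq ℓ hℓodd h
end

section
/- Let q be a prime with q ≡ ±2 (mod 5). Then q divides F_{q+1}, where F denotes the Fibonacci sequence. -/
/-!
Adjoin a square root `s` of `5` to `ZMod q` and put `φ = (1 + s) / 2`, `ψ = (1 - s) / 2`, so that
Binet's formula `F n * s = φ ^ n - ψ ^ n` holds. By quadratic reciprocity `5` is not a square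
mod `q`, so Euler's criterion gives `s ^ q = -s`: the Frobenius swaps `φ` and `ψ`. Hence
`φ ^ (q + 1) = ψ * φ = ψ ^ (q + 1)`, and `F (q + 1) * s = 0` in characteristic `q`.
-/

theorem ZMod.pow_div_two_eq_neg_one_of_not_isSquare {p : ℕ} [Fact p.Prime] {a : ZMod p}
    (ha : ¬IsSquare a) : a ^ (p / 2) = -1 :=
  have ha0 : a ≠ 0 := fun h ↦ ha (h ▸ IsSquare.zero)
  (ZMod.pow_div_two_eq_neg_one_or_one p ha0).resolve_left
    fun h ↦ ha ((ZMod.euler_criterion p ha0).mpr h)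

theorem ZMod.not_isSquare_five {q : ℕ} [Fact q.Prime] (hq : q ≠ 2)
    (h5 : q % 5 = 2 ∨ q % 5 = 3) : ¬IsSquare (5 : ZMod q) := by
  rw [← Nat.cast_ofNat,
    ← @ZMod.exists_sq_eq_prime_iff_of_mod_four_eq_one 5 q ⟨Nat.prime_five⟩ _ (by norm_num) hq,
    ← ZMod.natCast_mod]
  rcases h5 with h | h <;> rw [h] <;> decide

theorem pow_eq_neg_of_sq_eq {M : Type*} [Monoid M] [HasDistribNeg M] {s a : M} {n : ℕ}
    (hn : Odd n) (hs : s ^ 2 = a) (ha : a ^ (n / 2) = -1) : s ^ n = -s := by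
  rw [← Nat.two_mul_div_two_add_one_of_odd hn, pow_succ, pow_mul, hs, ha, neg_one_mul]

theorem Nat.cast_fib_mul_sub {R : Type*} [CommRing R] {α β : R} (hsum : α + β = 1)
    (hprod : α * β = -1) (n : ℕ) : (fib n : R) * (α - β) = α ^ n - β ^ n := by
  induction n using Nat.twoStepInduction with
  | zero => simp
  | one => simp
  | more n ih₀ ih₁ =>
    rw [fib_add_two, cast_add, add_mul, ih₀, ih₁]
    linear_combination (β ^ (n + 1) - α ^ (n + 1)) * hsum + (α ^ n - β ^ n) * hprod

theorem Nat.cast_fib_succ_eq_zero_of_sq_eq_five_of_pow_eq_neg {K : Type*} [Field K] (p : ℕ)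
    [Fact p.Prime] [CharP K p] (h2 : (2 : K) ≠ 0) (h5 : (5 : K) ≠ 0) {s : K} (hs : s ^ 2 = 5)
    (hsp : s ^ p = -s) : (fib (p + 1) : K) = 0 := by
  have hsum : (1 + s) / 2 + (1 - s) / 2 = (1 : K) := by field_simp; ring
  have hprod : (1 + s) / 2 * ((1 - s) / 2) = (-1 : K) := by field_simp; linear_combination -hs
  have hdiff : (1 + s) / 2 - (1 - s) / 2 = s := by field_simp; ring
  have hφ : ((1 + s) / 2) ^ p = (1 - s) / 2 := by
    rw [← frobenius_def, map_div₀, map_add, map_one, map_ofNat, frobenius_def, hsp, sub_eq_add_neg]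
  have hψ : ((1 - s) / 2) ^ p = (1 + s) / 2 := by
    rw [← frobenius_def, map_div₀, map_sub, map_one, map_ofNat, frobenius_def, hsp, sub_neg_eq_add]
  have hbinet := cast_fib_mul_sub hsum hprod (p + 1)
  rw [pow_succ, pow_succ, hφ, hψ, mul_comm ((1 - s) / 2), sub_self, hdiff] at hbinet
  exact (mul_eq_zero_iff_right (ne_zero_pow two_ne_zero (hs ▸ h5))).mp hbinet

theorem prime_dvd_fib_succ_of_pm_two_mod_five (q : ℕ) (hq : q.Prime)
    (h5 : q % 5 = 2 ∨ q % 5 = 3) :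
    q ∣ Nat.fib (q + 1) := by
  have : Fact q.Prime := ⟨hq⟩
  rcases eq_or_ne q 2 with rfl | hq2
  · decide
  have h5sq := ZMod.not_isSquare_five hq2 h5
  let K := AlgebraicClosure (ZMod q)
  obtain ⟨s, hs⟩ := IsAlgClosed.exists_pow_nat_eq (5 : K) two_pos
  have h2K : (2 : K) ≠ 0 := Ring.two_ne_zero (by rwa [ringChar.eq K q])
  have h5K : (5 : K) ≠ 0 := by
    have h5ne : (5 : ZMod q) ≠ 0 := fun h ↦ h5sq (h ▸ IsSquare.zero)
    simpa only [map_ofNat] using (map_ne_zero (algebraMap (ZMod q) K)).mpr h5ne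
  have hsq : s ^ q = -s := pow_eq_neg_of_sq_eq (hq.odd_of_ne_two hq2) hs <| by
    simpa only [map_pow, map_neg, map_one, map_ofNat] using
      congrArg (algebraMap (ZMod q) K) (ZMod.pow_div_two_eq_neg_one_of_not_isSquare h5sq)
  rw [← CharP.cast_eq_zero_iff K q]
  exact Nat.cast_fib_succ_eq_zero_of_sq_eq_five_of_pow_eq_neg q h2K h5K hs hsq
end

section
/- Let q > 2 be a prime with q ≡ ±2 (mod 5). Then there exists a positive integer N such that C^N ≡ −I (mod q), where C = [[0,1],[1,1]] is the Fibonacci companion matrix. -/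
/-!
The companion matrix `C` satisfies `C ^ 2 = C + 1`, so `d = 2C - 1` squares to `5`. Since `5` is a
non-residue modulo `q` (quadratic reciprocity), Euler's criterion gives `d ^ q = -d`, while the
Frobenius gives `d ^ q = 2C ^ q - 1`. Hence `C ^ q = 1 - C` is the conjugate root, and
`C ^ (q + 1) = C (1 - C) = -1`.
-/

theorem ZMod.not_isSquare_five_of_mod_five_eq_two_or_three {p : ℕ} [Fact p.Prime] (hp : p ≠ 2)
    (h : p % 5 = 2 ∨ p % 5 = 3) : ¬IsSquare (5 : ZMod p) := by
  have h_mod : ¬IsSquare ((p % 5 : ℕ) : ZMod 5) := by rcases h with h | h <;> rw [h] <;> decide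
  have : Fact (Nat.Prime 5) := ⟨Nat.prime_five⟩
  rwa [← Nat.cast_ofNat, ← ZMod.exists_sq_eq_prime_iff_of_mod_four_eq_one (by norm_num) hp,
    ← ZMod.natCast_mod]

section CharP

variable {R : Type*} [Ring R] {p : ℕ} [Fact p.Prime] [CharP R p]

theorem pow_char_eq_neg_of_sq_eq_natCast (hp : p ≠ 2) {a : ℕ} (ha : ¬IsSquare (a : ZMod p))
    {d : R} (hd : d ^ 2 = a) : d ^ p = -d := by
  have ha0 : (a : ZMod p) ≠ 0 := fun h ↦ ha (h ▸ IsSquare.zero)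
  have h_euler : (a : ZMod p) ^ (p / 2) = -1 :=
    (ZMod.pow_div_two_eq_neg_one_or_one p ha0).resolve_left
      (mt (ZMod.euler_criterion p ha0).mpr ha)
  have hp_odd : 2 * (p / 2) + 1 = p := by
    have := Nat.odd_iff.mp ((Fact.out : p.Prime).odd_of_ne_two hp)
    omega
  calc d ^ p = (d ^ 2) ^ (p / 2) * d := by rw [← pow_mul, ← pow_succ, hp_odd]
    _ = ZMod.castHom dvd_rfl R ((a : ZMod p) ^ (p / 2)) * d := by rw [hd, map_pow, map_natCast]
    _ = -d := by rw [h_euler, map_neg, map_one, neg_one_mul]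

theorem pow_char_eq_one_sub_of_sq_eq_add_one (hp : p ≠ 2) (h5 : ¬IsSquare (5 : ZMod p))
    {x : R} (hx : x ^ 2 = x + 1) : x ^ p = 1 - x := by
  have h_sq : (x - (1 - x)) ^ 2 = ((5 : ℕ) : R) :=
    calc (x - (1 - x)) ^ 2 = 4 * x ^ 2 - 4 * x + 1 := by noncomm_ring
      _ = ((5 : ℕ) : R) := by rw [hx]; push_cast; noncomm_ring; norm_num
  have h_frob : (x - (1 - x)) ^ p = 2 * x ^ p - 1 := by
    rw [sub_pow_char_of_commute p ((Commute.one_right x).sub_right (.refl x)),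
      sub_pow_char_of_commute p (.one_left x), one_pow]
    noncomm_ring
  have h_two : IsUnit (2 : R) := (CharP.isUnit_ofNat_iff Fact.out).mpr
    fun h ↦ hp ((Nat.prime_dvd_prime_iff_eq Fact.out Nat.prime_two).mp h)
  refine h_two.mul_left_cancel ?_
  calc 2 * x ^ p = (x - (1 - x)) ^ p + 1 := by rw [h_frob]; abel
    _ = 2 * (1 - x) := by
      rw [pow_char_eq_neg_of_sq_eq_natCast hp (by rwa [Nat.cast_ofNat]) h_sq]
      noncomm_ring

theorem pow_char_add_one_eq_neg_one_of_sq_eq_add_one (hp : p ≠ 2) (h5 : ¬IsSquare (5 : ZMod p))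
    {x : R} (hx : x ^ 2 = x + 1) : x ^ (p + 1) = -1 := by
  rw [pow_succ, pow_char_eq_one_sub_of_sq_eq_add_one hp h5 hx, sub_mul, one_mul, ← sq, hx]
  abel

end CharP

theorem exists_companion_pow_neg_one_of_pm_two_mod_five (q : ℕ) (hq : q.Prime) (hq2 : 2 < q)
    (h5 : q % 5 = 2 ∨ q % 5 = 3) :
    ∃ N : ℕ, 0 < N ∧
      (!![0, 1; 1, 1] : Matrix (Fin 2) (Fin 2) (ZMod q)) ^ N = -1 := by
  have : Fact q.Prime := ⟨hq⟩
  have h_companion : (!![0, 1; 1, 1] : Matrix (Fin 2) (Fin 2) (ZMod q)) ^ 2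
      = !![0, 1; 1, 1] + 1 := by
    simp [sq, Matrix.one_fin_two]
  exact ⟨q + 1, q.succ_pos, pow_char_add_one_eq_neg_one_of_sq_eq_add_one hq2.ne'
    (ZMod.not_isSquare_five_of_mod_five_eq_two_or_three hq2.ne' h5) h_companion⟩
end

section
/- Let q be a prime with q ≡ −1 (mod 20) or q ≡ 11 (mod 20). Then for every positive integer N, C^N ≢ −I (mod q), where C = [[0,1],[1,1]]. Consequently, such a prime q divides no Fibonacci number F_{2n−1} with n ≥ 3. -/
/-!
Since `q ≡ ±1 (mod 5)`, quadratic reciprocity makes `5` a square mod `q`, so `x² = x + 1` has a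
root `φ` in `ZMod q`, and `(1, φ)` is an eigenvector of `C` with eigenvalue `φ`. If `C^N = -1`,
then `φ^N = -1`, and `det C = -1` forces `N` to be even, so `-1 = (φ^(N/2))²` would be a square,
which fails as `q ≡ 3 (mod 4)`. For the Fibonacci part, `F_{2k+1} = F_{k+1}² + F_k²` is a sum of
two coprime squares, so `-1` is a square modulo each of its divisors.
-/

open Matrix

abbrev fibMatrix (R : Type*) [Zero R] [One R] : Matrix (Fin 2) (Fin 2) R := !![0, 1; 1, 1]

section fibMatrix

variable {R : Type*} [CommRing R]

theorem fibMatrix_mulVec_of_mul_self_eq_add_one {φ : R} (hφ : φ * φ = φ + 1) :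
    fibMatrix R *ᵥ ![1, φ] = φ • ![1, φ] := by
  ext i
  fin_cases i <;> simp [hφ, add_comm]

theorem fibMatrix_pow_mulVec_of_mul_self_eq_add_one {φ : R} (hφ : φ * φ = φ + 1) (N : ℕ) :
    fibMatrix R ^ N *ᵥ ![1, φ] = φ ^ N • ![1, φ] := by
  induction N with
  | zero => simp
  | succ N ih =>
    rw [pow_succ, ← mulVec_mulVec, fibMatrix_mulVec_of_mul_self_eq_add_one hφ, mulVec_smul, ih,
      smul_smul, pow_succ, mul_comm]

theorem even_of_fibMatrix_pow_eq_neg_one (h2 : (2 : R) ≠ 0) {N : ℕ}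
    (h : fibMatrix R ^ N = -1) : Even N := by
  have hdet : (-1 : R) ^ N = 1 := by
    simpa [det_pow, det_fin_two_of, det_neg] using congrArg det h
  by_contra hodd
  rw [(Nat.not_even_iff_odd.mp hodd).neg_one_pow] at hdet
  exact h2 (by linear_combination -hdet)

end fibMatrix

theorem exists_mul_self_eq_add_one {K : Type*} [Field K] (h2 : (2 : K) ≠ 0)
    (h5 : IsSquare (5 : K)) : ∃ φ : K, φ * φ = φ + 1 := by
  obtain ⟨s, hs⟩ := h5
  refine ⟨(1 + s) / 2, ?_⟩
  field_simp
  linear_combination -hs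

theorem fibMatrix_pow_ne_neg_one {K : Type*} [Field K] (h2 : (2 : K) ≠ 0)
    (h5 : IsSquare (5 : K)) (hi : ¬ IsSquare (-1 : K)) (N : ℕ) : fibMatrix K ^ N ≠ -1 := by
  intro h
  obtain ⟨φ, hφ⟩ := exists_mul_self_eq_add_one h2 h5
  have hφN : φ ^ N = -1 := by
    simpa [h] using (congrFun (fibMatrix_pow_mulVec_of_mul_self_eq_add_one hφ N) 0).symm
  obtain ⟨M, rfl⟩ := even_of_fibMatrix_pow_eq_neg_one h2 h
  exact hi ⟨φ ^ M, by rw [← hφN, pow_add]⟩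

theorem ZMod.isSquare_five_of_mod_five_eq_one_or_four {q : ℕ} [Fact q.Prime] (hq : q ≠ 2)
    (h5 : q % 5 = 1 ∨ q % 5 = 4) : IsSquare (5 : ZMod q) := by
  have : Fact (Nat.Prime 5) := ⟨by norm_num⟩
  have hsq : IsSquare (q : ZMod 5) := by
    rw [← ZMod.natCast_mod]
    rcases h5 with h | h <;> rw [h]
    exacts [⟨1, rfl⟩, ⟨2, rfl⟩]
  exact_mod_cast (ZMod.exists_sq_eq_prime_iff_of_mod_four_eq_one (by norm_num) hq).mp hsq

theorem ZMod.isSquare_neg_one_of_dvd_fib_two_mul_add_one {m n : ℕ}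
    (h : m ∣ Nat.fib (2 * n + 1)) : IsSquare (-1 : ZMod m) :=
  ZMod.isSquare_neg_one_of_dvd h <|
    ZMod.isSquare_neg_one_of_eq_sq_add_sq_of_coprime (Nat.fib_two_mul_add_one n)
      (Nat.fib_coprime_fib_succ n).symm

theorem no_midy_of_mod_twenty (q : ℕ) (hq : q.Prime)
    (h20 : q % 20 = 19 ∨ q % 20 = 11) :
    (∀ N : ℕ, 1 ≤ N →
      (!![0, 1; 1, 1] : Matrix (Fin 2) (Fin 2) (ZMod q)) ^ N ≠ -1) ∧
    (∀ n : ℕ, 3 ≤ n → ¬ q ∣ Nat.fib (2 * n - 1)) := by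
  have : Fact q.Prime := ⟨hq⟩
  have h2 : (2 : ZMod q) ≠ 0 := Ring.two_ne_zero (by rw [ZMod.ringChar_zmod_n]; omega)
  have h5 : IsSquare (5 : ZMod q) :=
    ZMod.isSquare_five_of_mod_five_eq_one_or_four (by omega) (by omega)
  have hi : ¬ IsSquare (-1 : ZMod q) := by
    rw [ZMod.exists_sq_eq_neg_one_iff]
    omega
  refine ⟨fun N _ => fibMatrix_pow_ne_neg_one h2 h5 hi N, fun n hn hdvd => hi ?_⟩
  obtain ⟨k, rfl⟩ : ∃ k, n = k + 1 := ⟨n - 1, by omega⟩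
  exact ZMod.isSquare_neg_one_of_dvd_fib_two_mul_add_one (by simpa [Nat.mul_add] using hdvd)
end
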